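/- Under the same assumptions as the energy-dependent uncertainty principle for local altered Hamiltonians, for ANY fixed tuple φ' = (φ'_1,…,φ'_m) of Hermitian positive semidefinite matrices with φ'_i ⪯ Π_i for each i (in particular, any tuple of states in the ranges of the Π_i), one has Σ_{s∈S} w_s · Var_ψ(H_{φ(s)}) ≥ (1/2) · (min_{1≤i≤m} (d_i − 1)/(d_i(d_i + 1))) · Tr(H_{φ'} ψ), where H_{φ'} := Σ_{i=1}^m (Π_i + φ'_i). -/

import Mathlib

/-!
Write `H_{φ(s)} = H̄ + X_s`, where `H̄ = Σ_i (Π_i + Π_i/d_i)` is the mean and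
`X_s = Σ_i (φ_i(s) − Π_i/d_i)` has mean zero. The `ψ`-covariance
`(A, B) ↦ Tr(ABψ) − Tr(Aψ)Tr(Bψ)` is bilinear, so the expected variance is
`Var_ψ(H̄) + Σ_{i,j} E cov(φ_i − Π_i/d_i, φ_j − Π_j/d_j)`. Since
`Tr(ABψ) = Tr((A ⊗ B) S_N (ψ ⊗ 1))` and `Tr(Aψ)Tr(Bψ) = Tr((A ⊗ B)(ψ ⊗ ψ))`, the covariance
only sees the second moments: pairwise independence kills the terms with `i ≠ j`, and the
2-design moments evaluate the diagonal ones through `α_i = Tr(Π_i ψ) ∈ [0, 1]` and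
`β_i = Tr(Π_i ψ Π_i ψ) ≤ α_i²`. Each diagonal term is then at least
`(d_i − 1)/(d_i(d_i + 1)) · α_i`, while `Tr(H_{φ'} ψ) ≤ 2 Σ_i α_i` because `φ'_i ⪯ Π_i`.
-/

open Matrix Kronecker
open scoped ComplexOrder

/-- The variance `Var_ψ(G) = Tr(G²ψ) − (Tr(Gψ))²` of a (Hermitian) observable `G`
in the (density-matrix) state `ψ`, as a real number. -/
noncomputable def matVar {N : ℕ} (ψ G : Matrix (Fin N) (Fin N) ℂ) : ℝ :=
  ((G * G * ψ).trace).re - (((G * ψ).trace).re) ^ 2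

/-- The swap matrix `S_N` on `ℂ^N ⊗ ℂ^N`. -/
noncomputable def swapMat (N : ℕ) : Matrix (Fin N × Fin N) (Fin N × Fin N) ℂ :=
  Matrix.of fun p q => if p.1 = q.2 ∧ p.2 = q.1 then 1 else 0

lemma LinearMap.sum_mul_apply_sub_apply_sub {S R M : Type*} [Fintype S] [CommRing R]
    [AddCommGroup M] [Module R M] (B : M →ₗ[R] M →ₗ[R] R) {w : S → R}
    (hw : ∑ s, w s = 1) {x y : S → M} {a b : M}
    (hx : ∑ s, w s • x s = a) (hy : ∑ s, w s • y s = b) :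
    ∑ s, w s * B (x s - a) (y s - b) = ∑ s, w s * B (x s) (y s) - B a b := by
  have hxb : ∑ s, w s * B (x s) b = B a b := by
    simp [← hx, map_sum, map_smul, LinearMap.sum_apply]
  have hay : ∑ s, w s * B a (y s) = B a b := by
    simp [← hy, map_sum, map_smul]
  have hab : ∑ s, w s * B a b = B a b := by rw [← Finset.sum_mul, hw, one_mul]
  simp only [map_sub, LinearMap.sub_apply, mul_sub, Finset.sum_sub_distrib, hxb, hay, hab]
  ring

section PositiveMatrices

open scoped MatrixOrder

variable {n : Type*} [Fintype n]

lemma Matrix.IsHermitian.trace_mul_eq_ofReal_re {A B : Matrix n n ℂ}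
    (hA : A.IsHermitian) (hB : B.IsHermitian) : (A * B).trace = ((A * B).trace.re : ℂ) := by
  refine (Complex.conj_eq_iff_re.mp ?_).symm
  rw [← Complex.star_def, ← trace_conjTranspose, conjTranspose_mul, hA.eq, hB.eq, trace_mul_comm]

lemma Matrix.PosSemidef.trace_mul_nonneg {A B : Matrix n n ℂ}
    (hA : A.PosSemidef) (hB : B.PosSemidef) : 0 ≤ (A * B).trace := by
  classical
  obtain ⟨C, rfl⟩ := CStarAlgebra.nonneg_iff_eq_star_mul_self.mp hB.nonneg
  rw [star_eq_conjTranspose, ← mul_assoc, trace_mul_comm]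
  simpa only [mul_assoc] using (hA.mul_mul_conjTranspose_same C).trace_nonneg

lemma Matrix.PosSemidef.re_trace_mul_nonneg {A B : Matrix n n ℂ}
    (hA : A.PosSemidef) (hB : B.PosSemidef) : 0 ≤ (A * B).trace.re :=
  (Complex.nonneg_iff.mp (hA.trace_mul_nonneg hB)).1

lemma Matrix.PosSemidef.re_trace_mul_self_le_sq [DecidableEq n] {M : Matrix n n ℂ}
    (hM : M.PosSemidef) : (M * M).trace.re ≤ M.trace.re ^ 2 := by
  have hsq : (M * M).trace = ∑ i, ((hM.1.eigenvalues i : ℂ)) ^ 2 := by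
    conv_lhs => rw [hM.1.spectral_theorem, ← map_mul, Unitary.conjStarAlgAut_apply,
      trace_mul_cycle, Unitary.coe_star_mul_self, one_mul, diagonal_mul_diagonal, trace_diagonal]
    simp [sq]
  rw [hsq, hM.1.trace_eq_sum_eigenvalues]
  simp only [Complex.re_sum, ← Complex.ofReal_pow, Complex.ofReal_re]
  exact Finset.sum_sq_le_sq_sum_of_nonneg fun i _ => hM.eigenvalues_nonneg i

variable {P ψ : Matrix n n ℂ}

lemma IsStarProjection.re_trace_mul_nonneg (hP : IsStarProjection P) (hψ : ψ.PosSemidef) :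
    0 ≤ (P * ψ).trace.re :=
  hP.nonneg.posSemidef.re_trace_mul_nonneg hψ

variable [DecidableEq n]

lemma IsStarProjection.re_trace_mul_le_one (hP : IsStarProjection P) (hψ : ψ.PosSemidef)
    (hψtr : ψ.trace = 1) : (P * ψ).trace.re ≤ 1 := by
  have h := hP.one_sub_nonneg.posSemidef.re_trace_mul_nonneg hψ
  rwa [sub_mul, one_mul, trace_sub, hψtr, Complex.sub_re, Complex.one_re, sub_nonneg] at h

lemma IsStarProjection.re_trace_mul_mul_mul_le_sq (hP : IsStarProjection P)
    (hψ : ψ.PosSemidef) : (P * ψ * P * ψ).trace.re ≤ (P * ψ).trace.re ^ 2 := by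
  have hPP : P * P = P := hP.isIdempotentElem
  have hM : (P * ψ * P).PosSemidef := by
    simpa only [hP.isSelfAdjoint.isHermitian.eq] using hψ.mul_mul_conjTranspose_same P
  have hMM : (P * ψ * P * (P * ψ * P)).trace = (P * ψ * P * ψ).trace := by
    rw [show P * ψ * P * (P * ψ * P) = P * ψ * (P * P) * ψ * P by simp only [mul_assoc],
      hPP, trace_mul_comm, ← mul_assoc, ← mul_assoc, ← mul_assoc, hPP]
  have hM1 : (P * ψ * P).trace = (P * ψ).trace := by
    rw [trace_mul_comm, ← mul_assoc, hPP]
  simpa only [hMM, hM1] using hM.re_trace_mul_self_le_sq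

end PositiveMatrices

section TraceCov

variable {n : Type*} [Fintype n]

noncomputable def traceCov (ψ : Matrix n n ℂ) : Matrix n n ℂ →ₗ[ℂ] Matrix n n ℂ →ₗ[ℂ] ℂ :=
  LinearMap.mk₂ ℂ (fun A B => (A * B * ψ).trace - (A * ψ).trace * (B * ψ).trace)
    (fun _ _ _ => by simp only [add_mul, trace_add]; ring)
    (fun _ _ _ => by simp only [smul_mul, trace_smul, smul_eq_mul]; ring)
    (fun _ _ _ => by simp only [mul_add, add_mul, trace_add]; ring)
    (fun _ _ _ => by simp only [Matrix.mul_smul, smul_mul, trace_smul, smul_eq_mul]; ring)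

@[simp]
lemma traceCov_apply (ψ A B : Matrix n n ℂ) :
    traceCov ψ A B = (A * B * ψ).trace - (A * ψ).trace * (B * ψ).trace := rfl

lemma trace_mul_mul_trace_mul_eq_trace_kronecker (A B C : Matrix n n ℂ) :
    (A * C).trace * (B * C).trace = ((A ⊗ₖ B) * (C ⊗ₖ C)).trace := by
  rw [← mul_kronecker_mul, trace_kronecker]

end TraceCov

section Variance

variable {N : ℕ} {ψ G : Matrix (Fin N) (Fin N) ℂ}

lemma matVar_eq_re_traceCov (hG : G.IsHermitian) (hψ : ψ.IsHermitian) :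
    matVar ψ G = (traceCov ψ G G).re := by
  rw [traceCov_apply, hG.trace_mul_eq_ofReal_re hψ, matVar, Complex.sub_re, ← Complex.ofReal_mul,
    Complex.ofReal_re, sq]

lemma matVar_nonneg (hG : G.IsHermitian) (hψ : ψ.PosSemidef) (hψtr : ψ.trace = 1) :
    0 ≤ matVar ψ G := by
  set t : ℝ := (G * ψ).trace.re
  have ht : (G * ψ).trace = t := hG.trace_mul_eq_ofReal_re hψ.1
  have hcentered : matVar ψ G = ((G - (t : ℂ) • 1)ᴴ * (G - (t : ℂ) • 1) * ψ).trace.re := by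
    rw [(hG.sub (isHermitian_one.smul (Complex.conj_ofReal _))).eq]
    simp only [matVar, sub_mul, mul_sub, Matrix.smul_mul, Matrix.mul_smul, one_mul, mul_one,
      smul_smul, trace_sub, trace_smul, ht, hψtr, smul_eq_mul, ← Complex.ofReal_mul,
      Complex.sub_re, Complex.ofReal_re]
    ring
  rw [hcentered]
  exact (posSemidef_conjTranspose_mul_self _).re_trace_mul_nonneg hψ

lemma sum_mul_matVar_eq_add {S : Type*} [Fintype S] {w : S → ℝ} (hw : ∑ s, w s = 1)
    {H : S → Matrix (Fin N) (Fin N) ℂ} {Hbar : Matrix (Fin N) (Fin N) ℂ}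
    (hmean : ∑ s, (w s : ℂ) • H s = Hbar) (hH : ∀ s, (H s).IsHermitian)
    (hHbar : Hbar.IsHermitian) (hψ : ψ.IsHermitian) :
    ∑ s, w s * matVar ψ (H s)
      = matVar ψ Hbar + (∑ s, (w s : ℂ) * traceCov ψ (H s - Hbar) (H s - Hbar)).re := by
  have hwℂ : ∑ s, (w s : ℂ) = 1 := by exact_mod_cast hw
  rw [LinearMap.sum_mul_apply_sub_apply_sub _ hwℂ hmean hmean, Complex.sub_re, Complex.re_sum,
    ← matVar_eq_re_traceCov hHbar hψ]
  simp only [Complex.re_ofReal_mul, matVar_eq_re_traceCov (hH _) hψ]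
  ring

end Variance

section Swap

variable {N : ℕ}

lemma swapMat_mul_kronecker (A B : Matrix (Fin N) (Fin N) ℂ) :
    swapMat N * (A ⊗ₖ B) = (B ⊗ₖ A) * swapMat N := by
  ext ⟨k, l⟩ ⟨p, q⟩
  simp only [mul_apply, swapMat, of_apply, Fintype.sum_prod_type, kroneckerMap_apply, ite_and]
  rw [Finset.sum_comm]
  simp [Finset.sum_ite_eq, Finset.sum_ite_eq', mul_comm]

lemma trace_swapMat_mul_kronecker (A B : Matrix (Fin N) (Fin N) ℂ) :
    (swapMat N * (A ⊗ₖ B)).trace = (A * B).trace := by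
  simp only [trace, diag, mul_apply, swapMat, of_apply, Fintype.sum_prod_type,
    kroneckerMap_apply, ite_and]
  rw [Finset.sum_comm]
  simp [Finset.sum_ite_eq]

lemma trace_mul_mul_eq_trace_kronecker (A B C : Matrix (Fin N) (Fin N) ℂ) :
    (A * B * C).trace = ((A ⊗ₖ B) * (swapMat N * (C ⊗ₖ 1))).trace := by
  rw [swapMat_mul_kronecker, ← mul_assoc, ← mul_kronecker_mul, trace_mul_comm _ (swapMat N),
    trace_swapMat_mul_kronecker, mul_one, mul_assoc]

lemma traceCov_eq_trace_kronecker (ψ A B : Matrix (Fin N) (Fin N) ℂ) :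
    traceCov ψ A B = ((A ⊗ₖ B) * (swapMat N * (ψ ⊗ₖ 1) - ψ ⊗ₖ ψ)).trace := by
  rw [traceCov_apply, trace_mul_mul_eq_trace_kronecker, trace_mul_mul_trace_mul_eq_trace_kronecker,
    mul_sub, trace_sub]

lemma trace_kronecker_one_add_swapMat_mul_kronecker_self {P : Matrix (Fin N) (Fin N) ℂ}
    (hP : P * P = P) (C : Matrix (Fin N) (Fin N) ℂ) :
    ((P ⊗ₖ P) * (1 + swapMat N) * (P ⊗ₖ P) * (C ⊗ₖ C)).trace
      = (P * C).trace ^ 2 + (P * C * P * C).trace := by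
  have hPP : (P ⊗ₖ P) * (P ⊗ₖ P) = P ⊗ₖ P := by rw [← mul_kronecker_mul, hP]
  have hsym : (P ⊗ₖ P) * (1 + swapMat N) * (P ⊗ₖ P) = (P ⊗ₖ P) * (1 + swapMat N) := by
    rw [mul_assoc, add_mul, one_mul, swapMat_mul_kronecker, mul_add, ← mul_assoc, hPP, mul_add,
      mul_one]
  have hswap : ((P ⊗ₖ P) * swapMat N * (C ⊗ₖ C)).trace = (P * C * P * C).trace := by
    rw [mul_assoc, trace_mul_comm, mul_assoc, ← mul_kronecker_mul, trace_swapMat_mul_kronecker,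
      mul_assoc, trace_mul_comm]
    simp only [mul_assoc]
  rw [hsym, mul_add, mul_one, add_mul, trace_add, hswap, sq,
    trace_mul_mul_trace_mul_eq_trace_kronecker]

end Swap

section Ensemble

variable {S : Type*} [Fintype S] {w : S → ℂ}

lemma sum_mul_trace_mul {m : Type*} [Fintype m] (x : S → Matrix m m ℂ) (R : Matrix m m ℂ) :
    ∑ s, w s * (x s * R).trace = ((∑ s, w s • x s) * R).trace := by
  simp only [Finset.sum_mul, trace_sum, smul_mul, trace_smul, smul_eq_mul]

variable {N : ℕ} {ψ : Matrix (Fin N) (Fin N) ℂ}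

lemma sum_mul_traceCov_of_sum_kronecker {x y : S → Matrix (Fin N) (Fin N) ℂ}
    {a b : Matrix (Fin N) (Fin N) ℂ} (hxy : ∑ s, w s • (x s ⊗ₖ y s) = a ⊗ₖ b) :
    ∑ s, w s * traceCov ψ (x s) (y s) = traceCov ψ a b := by
  simp only [traceCov_eq_trace_kronecker, sum_mul_trace_mul, hxy]

lemma sum_mul_traceCov_self_of_twoDesign {P : Matrix (Fin N) (Fin N) ℂ} (hP : P * P = P)
    {d : ℂ} {φ : S → Matrix (Fin N) (Fin N) ℂ} (hφ : ∀ s, φ s * φ s = φ s)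
    (hfirst : ∑ s, w s • φ s = d⁻¹ • P)
    (hsecond : ∑ s, w s • (φ s ⊗ₖ φ s) =
      (d * (d + 1))⁻¹ • ((P ⊗ₖ P) * (1 + swapMat N) * (P ⊗ₖ P))) :
    ∑ s, w s * traceCov ψ (φ s) (φ s)
      = (P * ψ).trace / d - ((P * ψ).trace ^ 2 + (P * ψ * P * ψ).trace) / (d * (d + 1)) := by
  have hmean : ∑ s, w s * (φ s * ψ).trace = (P * ψ).trace / d := by
    rw [sum_mul_trace_mul, hfirst, smul_mul, trace_smul, smul_eq_mul, div_eq_inv_mul]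
  have hsq : ∑ s, w s * (φ s * ψ).trace ^ 2
      = ((P * ψ).trace ^ 2 + (P * ψ * P * ψ).trace) / (d * (d + 1)) := by
    conv_lhs => simp only [sq, trace_mul_mul_trace_mul_eq_trace_kronecker]
    rw [sum_mul_trace_mul, hsecond, smul_mul, trace_smul,
      trace_kronecker_one_add_swapMat_mul_kronecker_self hP, smul_eq_mul, div_eq_inv_mul]
  simp only [traceCov_apply, hφ, mul_sub, Finset.sum_sub_distrib, ← sq, hmean, hsq]

lemma sum_mul_traceCov_sum_sub (hw : ∑ s, w s = 1) {ι : Type*} [Fintype ι]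
    {φ : S → ι → Matrix (Fin N) (Fin N) ℂ} {P : ι → Matrix (Fin N) (Fin N) ℂ}
    (hfirst : ∀ i, ∑ s, w s • φ s i = P i)
    (hpair : ∀ i j, i ≠ j → ∑ s, w s • (φ s i ⊗ₖ φ s j) = P i ⊗ₖ P j) :
    ∑ s, w s * traceCov ψ (∑ i, (φ s i - P i)) (∑ i, (φ s i - P i))
      = ∑ i, (∑ s, w s * traceCov ψ (φ s i) (φ s i) - traceCov ψ (P i) (P i)) := by
  have hcov : ∀ i j, ∑ s, w s * traceCov ψ (φ s i - P i) (φ s j - P j)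
      = ∑ s, w s * traceCov ψ (φ s i) (φ s j) - traceCov ψ (P i) (P j) := fun i j =>
    LinearMap.sum_mul_apply_sub_apply_sub _ hw (hfirst i) (hfirst j)
  calc ∑ s, w s * traceCov ψ (∑ i, (φ s i - P i)) (∑ i, (φ s i - P i))
      = ∑ i, ∑ j, ∑ s, w s * traceCov ψ (φ s i - P i) (φ s j - P j) := by
        simp only [map_sum, LinearMap.sum_apply, Finset.mul_sum]
        rw [Finset.sum_comm]
        exact (Finset.sum_congr rfl fun j _ => Finset.sum_comm).trans Finset.sum_comm
    _ = ∑ i, ∑ s, w s * traceCov ψ (φ s i - P i) (φ s i - P i) :=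
        Finset.sum_congr rfl fun i _ => by
          refine Fintype.sum_eq_single i fun j hj => ?_
          rw [hcov, sum_mul_traceCov_of_sum_kronecker (hpair i j (Ne.symm hj)), sub_self]
    _ = _ := Finset.sum_congr rfl fun i _ => hcov i i

end Ensemble

lemma sub_one_div_mul_le_twoDesign_noise {d α β : ℝ} (hd : 1 ≤ d) (hα0 : 0 ≤ α) (hα1 : α ≤ 1)
    (hβ : β ≤ α ^ 2) :
    (d - 1) / (d * (d + 1)) * α
      ≤ α / d - (α ^ 2 + β) / (d * (d + 1)) - (α / d ^ 2 - α ^ 2 / d ^ 2) := by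
  have hd0 : 0 < d := by linarith
  rw [← sub_nonneg]
  have hform : α / d - (α ^ 2 + β) / (d * (d + 1)) - (α / d ^ 2 - α ^ 2 / d ^ 2)
      - (d - 1) / (d * (d + 1)) * α = (α * (d - 1) + α ^ 2 - d * β) / (d ^ 2 * (d + 1)) := by
    field_simp
    ring
  rw [hform]
  -- the numerator is at least `(d - 1) α (1 - α)` because `β ≤ α²`
  have hnum : 0 ≤ α * (d - 1) + α ^ 2 - d * β := by
    nlinarith [mul_nonneg (mul_nonneg hα0 (sub_nonneg.2 hα1)) (sub_nonneg.2 hd),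
      mul_le_mul_of_nonneg_left hβ hd0.le]
  positivity

lemma sum_mul_matVar_alteredHamiltonian_eq {N : ℕ} {ι S : Type*} [Fintype ι] [Fintype S]
    {Pr : ι → Matrix (Fin N) (Fin N) ℂ} (hPrHerm : ∀ i, (Pr i).IsHermitian)
    (hPrIdem : ∀ i, Pr i * Pr i = Pr i) (d : ι → ℝ) {ψ : Matrix (Fin N) (Fin N) ℂ}
    (hψ : ψ.IsHermitian) {w : S → ℝ} (hwsum : ∑ s, w s = 1)
    {φ : S → ι → Matrix (Fin N) (Fin N) ℂ} (hφHerm : ∀ s i, (φ s i).IsHermitian)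
    (hφIdem : ∀ s i, φ s i * φ s i = φ s i)
    (hfirst : ∀ i, ∑ s, (w s : ℂ) • φ s i = ((d i : ℂ))⁻¹ • Pr i)
    (hsecond : ∀ i, ∑ s, (w s : ℂ) • (φ s i ⊗ₖ φ s i) =
      ((d i : ℂ) * ((d i : ℂ) + 1))⁻¹ •
        ((Pr i ⊗ₖ Pr i) * (1 + swapMat N) * (Pr i ⊗ₖ Pr i)))
    (hpair : ∀ i j, i ≠ j → ∑ s, (w s : ℂ) • (φ s i ⊗ₖ φ s j) =
      (((d i : ℂ))⁻¹ • Pr i) ⊗ₖ (((d j : ℂ))⁻¹ • Pr j)) :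
    ∑ s, w s * matVar ψ (∑ i, (Pr i + φ s i))
      = matVar ψ (∑ i, (Pr i + ((d i : ℂ))⁻¹ • Pr i))
        + ∑ i, ((Pr i * ψ).trace.re / d i
          - ((Pr i * ψ).trace.re ^ 2 + (Pr i * ψ * Pr i * ψ).trace.re) / (d i * (d i + 1))
          - ((Pr i * ψ).trace.re / d i ^ 2 - (Pr i * ψ).trace.re ^ 2 / d i ^ 2)) := by
  set P : ι → Matrix (Fin N) (Fin N) ℂ := fun i => ((d i : ℂ))⁻¹ • Pr i
  have hw : ∑ s, (w s : ℂ) = 1 := by exact_mod_cast hwsum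
  have hPHerm : ∀ i, (P i).IsHermitian := fun i =>
    (hPrHerm i).smul (IsSelfAdjoint.inv₀ (Complex.conj_ofReal _))
  have hmean : ∑ s, (w s : ℂ) • ∑ i, (Pr i + φ s i) = ∑ i, (Pr i + P i) := by
    simp only [Finset.smul_sum, smul_add]
    rw [Finset.sum_comm]
    simp only [Finset.sum_add_distrib, ← Finset.sum_smul, hw, one_smul, hfirst, P]
  have hnoise : ∀ s, ∑ i, (Pr i + φ s i) - ∑ i, (Pr i + P i) = ∑ i, (φ s i - P i) := fun s => by
    rw [← Finset.sum_sub_distrib]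
    simp only [add_sub_add_left_eq_sub]
  rw [sum_mul_matVar_eq_add hwsum hmean
    (fun s => isSelfAdjoint_sum _ fun i _ => (hPrHerm i).add (hφHerm s i))
    (isSelfAdjoint_sum _ fun i _ => (hPrHerm i).add (hPHerm i)) hψ]
  simp only [hnoise]
  rw [sum_mul_traceCov_sum_sub hw hfirst hpair, Complex.re_sum]
  congr 1
  refine Finset.sum_congr rfl fun i _ => ?_
  have hα : (Pr i * ψ).trace = ((Pr i * ψ).trace.re : ℂ) := (hPrHerm i).trace_mul_eq_ofReal_re hψ
  have hβ : (Pr i * ψ * Pr i * ψ).trace = ((Pr i * ψ * Pr i * ψ).trace.re : ℂ) := by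
    have h := (isHermitian_mul_mul_conjTranspose (Pr i) hψ).trace_mul_eq_ofReal_re hψ
    rwa [(hPrHerm i).eq] at h
  rw [sum_mul_traceCov_self_of_twoDesign (hPrIdem i) (fun s => hφIdem s i) (hfirst i) (hsecond i)]
  simp only [traceCov_apply, Matrix.smul_mul, Matrix.mul_smul, smul_smul, hPrIdem, trace_smul,
    smul_eq_mul]
  rw [hα, hβ]
  norm_cast
  ring

theorem expected_variance_lower_bound_arbitrary_altered_general
    {N m : ℕ}
    (Pr : Fin m → Matrix (Fin N) (Fin N) ℂ)
    (hPrHerm : ∀ i, (Pr i).IsHermitian)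
    (hPrIdem : ∀ i, Pr i * Pr i = Pr i)
    (d : Fin m → ℝ) (hd1 : ∀ i, 1 ≤ d i)
    (ψ : Matrix (Fin N) (Fin N) ℂ) (hψ : ψ.PosSemidef) (hψtr : ψ.trace = 1)
    (S : Type) [Fintype S] (w : S → ℝ)
    (hwsum : ∑ s, w s = 1)
    (φ : S → Fin m → Matrix (Fin N) (Fin N) ℂ)
    (hφHerm : ∀ s i, (φ s i).IsHermitian)
    (hφIdem : ∀ s i, φ s i * φ s i = φ s i)
    (hfirst : ∀ i, ∑ s, (w s : ℂ) • φ s i = ((d i : ℂ))⁻¹ • Pr i)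
    (hsecond : ∀ i, ∑ s, (w s : ℂ) • (φ s i ⊗ₖ φ s i) =
      ((d i : ℂ) * ((d i : ℂ) + 1))⁻¹ •
        ((Pr i ⊗ₖ Pr i) * (1 + swapMat N) * (Pr i ⊗ₖ Pr i)))
    (hpair : ∀ i j, i ≠ j → ∑ s, (w s : ℂ) • (φ s i ⊗ₖ φ s j) =
      (((d i : ℂ))⁻¹ • Pr i) ⊗ₖ (((d j : ℂ))⁻¹ • Pr j))
    (φ' : Fin m → Matrix (Fin N) (Fin N) ℂ)
    (hφ'le : ∀ i, (Pr i - φ' i).PosSemidef) :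
    ∑ s, w s * matVar ψ (∑ i, (Pr i + φ s i)) ≥
      (1 / 2) * (⨅ i : Fin m, (d i - 1) / (d i * (d i + 1))) *
        (((∑ i, (Pr i + φ' i)) * ψ).trace).re := by
  set c := ⨅ i : Fin m, (d i - 1) / (d i * (d i + 1))
  set α : Fin m → ℝ := fun i => (Pr i * ψ).trace.re
  have hP : ∀ i, IsStarProjection (Pr i) := fun i => ⟨hPrIdem i, hPrHerm i⟩
  have hc0 : 0 ≤ c := Real.iInf_nonneg fun i =>
    div_nonneg (by linarith [hd1 i]) (mul_nonneg (by linarith [hd1 i]) (by linarith [hd1 i]))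
  have hrhs : (((∑ i, (Pr i + φ' i)) * ψ).trace).re ≤ 2 * ∑ i, α i := by
    simp only [Finset.sum_mul, add_mul, trace_sum, trace_add, Complex.re_sum, Complex.add_re,
      Finset.mul_sum, two_mul]
    refine Finset.sum_le_sum fun i _ => add_le_add_right ?_ _
    have h := (hφ'le i).re_trace_mul_nonneg hψ
    rwa [sub_mul, trace_sub, Complex.sub_re, sub_nonneg] at h
  rw [ge_iff_le, sum_mul_matVar_alteredHamiltonian_eq hPrHerm hPrIdem d hψ.1 hwsum hφHerm hφIdem
    hfirst hsecond hpair]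
  calc 1 / 2 * c * (((∑ i, (Pr i + φ' i)) * ψ).trace).re
      ≤ ∑ i, c * α i := by
        rw [← Finset.mul_sum]
        linarith [mul_le_mul_of_nonneg_left hrhs hc0]
    _ ≤ _ := Finset.sum_le_sum fun i _ =>
        (mul_le_mul_of_nonneg_right (ciInf_le (Set.finite_range _).bddBelow i)
          ((hP i).re_trace_mul_nonneg hψ)).trans
        (sub_one_div_mul_le_twoDesign_noise (hd1 i) ((hP i).re_trace_mul_nonneg hψ)
          ((hP i).re_trace_mul_le_one hψ hψtr) ((hP i).re_trace_mul_mul_mul_le_sq hψ))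
    _ ≤ _ := le_add_of_nonneg_left (matVar_nonneg (isSelfAdjoint_sum _ fun i _ =>
        (hPrHerm i).add ((hPrHerm i).smul (IsSelfAdjoint.inv₀ (Complex.conj_ofReal _))))
        hψ hψtr)

/-- Under the assumptions of the energy-dependent uncertainty principle, for an
arbitrary fixed tuple `φ'` of positive semidefinite matrices with `φ'_i ⪯ Π_i`,
the expected variance of the altered Hamiltonians is at least
`(1/2) · min_i ((d_i−1)/(d_i(d_i+1))) · Tr(H_{φ'} ψ)` with `H_{φ'} = Σ_i (Π_i + φ'_i)`. -/
theorem expected_variance_lower_bound_arbitrary_altered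
    {N m : ℕ} (hN : 1 ≤ N) (hm : 0 < m)
    (Pr : Fin m → Matrix (Fin N) (Fin N) ℂ)
    (hPrHerm : ∀ i, (Pr i).IsHermitian)
    (hPrIdem : ∀ i, Pr i * Pr i = Pr i)
    (d : Fin m → ℝ) (hd : ∀ i, d i = ((Pr i).trace).re) (hd1 : ∀ i, 1 ≤ d i)
    (ψ : Matrix (Fin N) (Fin N) ℂ) (hψ : ψ.PosSemidef) (hψtr : ψ.trace = 1)
    (S : Type) [Fintype S] (w : S → ℝ)
    (hw0 : ∀ s, 0 ≤ w s) (hw1 : ∀ s, w s ≤ 1) (hwsum : ∑ s, w s = 1)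
    (φ : S → Fin m → Matrix (Fin N) (Fin N) ℂ)
    (hφHerm : ∀ s i, (φ s i).IsHermitian)
    (hφIdem : ∀ s i, φ s i * φ s i = φ s i)
    (hφtr : ∀ s i, (φ s i).trace = 1)
    (hφrange : ∀ s i, Pr i * φ s i = φ s i ∧ φ s i * Pr i = φ s i)
    (hfirst : ∀ i, ∑ s, (w s : ℂ) • φ s i = ((d i : ℂ))⁻¹ • Pr i)
    (hsecond : ∀ i, ∑ s, (w s : ℂ) • (φ s i ⊗ₖ φ s i) =
      ((d i : ℂ) * ((d i : ℂ) + 1))⁻¹ •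
        ((Pr i ⊗ₖ Pr i) * (1 + swapMat N) * (Pr i ⊗ₖ Pr i)))
    (hpair : ∀ i j, i ≠ j → ∑ s, (w s : ℂ) • (φ s i ⊗ₖ φ s j) =
      (((d i : ℂ))⁻¹ • Pr i) ⊗ₖ (((d j : ℂ))⁻¹ • Pr j))
    (φ' : Fin m → Matrix (Fin N) (Fin N) ℂ)
    (hφ'psd : ∀ i, (φ' i).PosSemidef)
    (hφ'le : ∀ i, (Pr i - φ' i).PosSemidef) :
    ∑ s, w s * matVar ψ (∑ i, (Pr i + φ s i)) ≥
      (1 / 2) * (⨅ i : Fin m, (d i - 1) / (d i * (d i + 1))) *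
        (((∑ i, (Pr i + φ' i)) * ψ).trace).re :=
  expected_variance_lower_bound_arbitrary_altered_general Pr hPrHerm hPrIdem d hd1 ψ hψ hψtr S w
    hwsum φ hφHerm hφIdem hfirst hsecond hpair φ' hφ'le
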